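/- Optimality bound for four-stage effective order three methods: there is no strictly lower triangular matrix A ∈ ℝ^{4×4} and vector b ∈ ℝ⁴ such that, with c = A·e, the order conditions bᵀe = 1, bᵀc = 1/2, bᵀ(Ac) = 1/6 hold and the absolute monotonicity conditions hold at some r > 2 (I + rA invertible, K(I + rA)^{-1} ≥ 0 componentwise, and e₅ − r·K(I + rA)^{-1}e₄ ≥ 0 componentwise, where K stacks A on top of bᵀ). Hence the SSP coefficient of any four-stage method of effective order three is at most 2, and the family of Theorem 5.2 is optimal. -/

import Mathlib

/-!
Put `M = (1 + rA)⁻¹`. Absolute monotonicity says that `bᵀM`, `Me` and `1 - M = rAM` are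
nonnegative, hence so are `bᵀM(1 - M)Me` and `bᵀM(1 - M)²Me`. As `(rA)⁴ = 0`, both are
polynomials in the moments `bᵀ(rA)ᵏe`, `k ≤ 3`, and the combination with weights 2 and 3 cancels
the unknown moment `bᵀ(rA)³e`, leaving `2 · r/2 - 3 · r²/6 = r(2 - r)/2` by the order conditions.
-/

open Finset in
/-- The matrix stacking `A` on top of `bᵀ`. -/
def rkStack {s : ℕ} (A : Matrix (Fin s) (Fin s) ℝ) (b : Fin s → ℝ) :
    Matrix (Fin (s + 1)) (Fin s) ℝ :=
  Matrix.of fun i j => if h : (i : ℕ) < s then A ⟨i, h⟩ j else b j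

open Matrix

namespace Matrix

variable {R : Type*}

theorem pow_apply_eq_zero_of_strictLowerTriangular [Semiring R] {n : ℕ}
    {A : Matrix (Fin n) (Fin n) R} (hA : ∀ i j, i ≤ j → A i j = 0) (k : ℕ) {i j : Fin n}
    (hij : (i : ℕ) < j + k) : (A ^ k) i j = 0 := by
  induction k generalizing j with
  | zero => exact one_apply_ne (Fin.ne_of_lt (by simpa using hij))
  | succ k ih =>
    rw [pow_succ, mul_apply]
    refine Finset.sum_eq_zero fun l _ => ?_
    rcases le_or_gt l j with hlj | hjl
    · rw [hA l j hlj, mul_zero]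
    · rw [ih (by omega), zero_mul]

theorem pow_eq_zero_of_strictLowerTriangular [Semiring R] {n : ℕ}
    {A : Matrix (Fin n) (Fin n) R} (hA : ∀ i j, i ≤ j → A i j = 0) : A ^ n = 0 := by
  ext i j
  exact pow_apply_eq_zero_of_strictLowerTriangular hA n (by omega)

variable {m n : Type*} [Fintype n] [Semiring R] [PartialOrder R] [IsOrderedRing R]

theorem mulVec_nonneg {P : Matrix m n R} (hP : ∀ i j, 0 ≤ P i j) {v : n → R} (hv : 0 ≤ v) :
    0 ≤ P *ᵥ v :=
  fun i => dotProduct_nonneg_of_nonneg (hP i) hv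

theorem mul_apply_nonneg {P : Matrix m n R} {Q : Matrix n m R} (hP : ∀ i j, 0 ≤ P i j)
    (hQ : ∀ i j, 0 ≤ Q i j) (i j : m) : 0 ≤ (P * Q) i j :=
  Finset.sum_nonneg fun k _ => mul_nonneg (hP i k) (hQ k j)

theorem dotProduct_mulVec_mul_mul_nonneg [Fintype m] {b : m → R} {M : Matrix m n R}
    {P : Matrix n n R} {N : Matrix n m R} {w : m → R} (hb : 0 ≤ b ᵥ* M) (hP : ∀ i j, 0 ≤ P i j)
    (hw : 0 ≤ N *ᵥ w) : 0 ≤ b ⬝ᵥ ((M * P * N) *ᵥ w) := by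
  rw [← mulVec_mulVec, ← mulVec_mulVec, dotProduct_mulVec]
  exact dotProduct_nonneg_of_nonneg hb (mulVec_nonneg hP hw)

end Matrix

theorem inv_one_add_combination_of_pow_four_eq_zero {R : Type*} [Ring R] {x m : R}
    (hx : x ^ 4 = 0) (h₁ : (1 + x) * m = 1) (h₂ : m * (1 + x) = 1) :
    2 • (m * (1 - m) * m) + 3 • (m * ((1 - m) * (1 - m)) * m) = 2 • x - 3 • x ^ 2 := by
  let u : Rˣ := ⟨1 + x, m, h₁, h₂⟩
  have hpow : ∀ k ≤ 4, m ^ k * (1 + x) ^ 4 = (1 + x) ^ (4 - k) := by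
    intro k hk
    have h := congrArg Units.val (show u⁻¹ ^ k * u ^ 4 = u ^ (4 - k) by
      rw [← zpow_natCast, ← zpow_natCast, ← zpow_natCast, Nat.cast_sub hk]; group)
    simpa [u] using h
  apply (Units.mul_left_inj (u ^ 4)).mp
  simp only [Units.val_pow_eq_pow_val]
  -- after multiplying by `(1 + x)⁴` both sides are `2x + 5x²` modulo `x⁴`
  calc (2 • (m * (1 - m) * m) + 3 • (m * ((1 - m) * (1 - m)) * m)) * (1 + x) ^ 4
      = 5 • (m ^ 2 * (1 + x) ^ 4) - 8 • (m ^ 3 * (1 + x) ^ 4) + 3 • (m ^ 4 * (1 + x) ^ 4) := by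
        noncomm_ring
    _ = (2 • x - 3 • x ^ 2) * (1 + x) ^ 4 + x ^ 4 * (10 + 10 * x + 3 * x ^ 2) := by
        rw [hpow 2 (by norm_num), hpow 3 (by norm_num), hpow 4 le_rfl, Nat.sub_self, pow_zero]
        noncomm_ring
    _ = (2 • x - 3 • x ^ 2) * (1 + x) ^ 4 := by rw [hx, zero_mul, add_zero]

section rkStack

variable {s : ℕ} (A : Matrix (Fin s) (Fin s) ℝ) (b : Fin s → ℝ)

@[simp]
theorem rkStack_castSucc (i j : Fin s) : rkStack A b i.castSucc j = A i j := by
  simp [rkStack]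

@[simp]
theorem rkStack_last (j : Fin s) : rkStack A b (Fin.last s) j = b j := by
  simp [rkStack]

theorem rkStack_mul (N : Matrix (Fin s) (Fin s) ℝ) :
    rkStack A b * N = rkStack (A * N) (b ᵥ* N) := by
  ext i j
  induction i using Fin.lastCases with
  | last => simp [mul_apply, vecMul, dotProduct]
  | cast i => simp [mul_apply]

theorem rkStack_nonneg_iff :
    (∀ i j, 0 ≤ rkStack A b i j) ↔ (∀ i j, 0 ≤ A i j) ∧ 0 ≤ b := by
  refine ⟨fun h => ⟨fun i j => ?_, fun j => ?_⟩, fun ⟨hA, hb⟩ i j => ?_⟩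
  · simpa using h i.castSucc j
  · simpa using h (Fin.last s) j
  · induction i using Fin.lastCases with
    | last => simpa using hb j
    | cast i => simpa using hA i j

theorem rkStack_mulVec_castSucc (v : Fin s → ℝ) (i : Fin s) :
    (rkStack A b *ᵥ v) i.castSucc = (A *ᵥ v) i := by
  simp [mulVec, dotProduct]

end rkStack

def IsAbsolutelyMonotoneAt {s : ℕ} (A : Matrix (Fin s) (Fin s) ℝ) (b : Fin s → ℝ) (r : ℝ) :
    Prop :=
  IsUnit (1 + r • A).det ∧
    (∀ i j, 0 ≤ (rkStack A b * (1 + r • A)⁻¹) i j) ∧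
    ∀ i, 0 ≤ 1 - r * ((rkStack A b * (1 + r • A)⁻¹) *ᵥ fun _ => 1) i

namespace IsAbsolutelyMonotoneAt

variable {s : ℕ} {A : Matrix (Fin s) (Fin s) ℝ} {b : Fin s → ℝ} {r : ℝ}

theorem nonneg (h : IsAbsolutelyMonotoneAt A b r) (hr : 0 ≤ r) :
    0 ≤ b ᵥ* (1 + r • A)⁻¹ ∧ (∀ i j, 0 ≤ (1 - (1 + r • A)⁻¹) i j) ∧
      0 ≤ (1 + r • A)⁻¹ *ᵥ fun _ => 1 := by
  obtain ⟨hdet, hK, hKe⟩ := h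
  set M := (1 + r • A)⁻¹
  rw [rkStack_mul] at hK hKe
  obtain ⟨hAM, hbM⟩ := (rkStack_nonneg_iff _ _).mp hK
  have hrAM : r • A * M = 1 - M := by
    rw [eq_sub_iff_add_eq, ← mul_nonsing_inv _ hdet]
    noncomm_ring
  refine ⟨hbM, fun i j => ?_, fun i => ?_⟩
  · rw [← hrAM, smul_mul, Matrix.smul_apply, smul_eq_mul]
    exact mul_nonneg hr (hAM i j)
  · have hMe : M *ᵥ (fun _ => 1) = (fun _ => 1) - r • ((A * M) *ᵥ fun _ => 1) := by
      rw [← smul_mulVec, ← smul_mul, hrAM, sub_mulVec, one_mulVec, sub_sub_cancel]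
    simpa [hMe, rkStack_mulVec_castSucc] using hKe i.castSucc

theorem le_two (h : IsAbsolutelyMonotoneAt A b r) (hA : A ^ 4 = 0)
    (hbc : b ⬝ᵥ (A *ᵥ fun _ => 1) = 1 / 2) (hbAc : b ⬝ᵥ (A ^ 2 *ᵥ fun _ => 1) = 1 / 6) :
    r ≤ 2 := by
  rcases le_or_gt r 0 with hr | hr
  · linarith
  obtain ⟨hbM, hP, hMe⟩ := h.nonneg hr.le
  have hcomb := congrArg (fun X => b ⬝ᵥ (X *ᵥ fun _ => 1))
    (inv_one_add_combination_of_pow_four_eq_zero (x := r • A)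
      (by rw [smul_pow, hA, smul_zero]) (mul_nonsing_inv _ h.1) (nonsing_inv_mul _ h.1))
  simp only [add_mulVec, sub_mulVec, smul_mulVec, dotProduct_add, dotProduct_sub,
    dotProduct_smul] at hcomb
  rw [smul_pow, smul_mulVec, dotProduct_smul, hbc, hbAc] at hcomb
  simp only [nsmul_eq_mul, smul_eq_mul] at hcomb
  nlinarith [dotProduct_mulVec_mul_mul_nonneg hbM hP hMe,
    dotProduct_mulVec_mul_mul_nonneg hbM (mul_apply_nonneg hP hP) hMe]

end IsAbsolutelyMonotoneAt

open Finset in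
/-- Optimality bound: no four-stage explicit method satisfying the effective
order three conditions is absolutely monotonic at any r > 2. -/
theorem essprk432_optimality :
    ¬ ∃ (A : Matrix (Fin 4) (Fin 4) ℝ) (b : Fin 4 → ℝ) (r : ℝ),
      (∀ i j : Fin 4, i ≤ j → A i j = 0) ∧
      (let c : Fin 4 → ℝ := A.mulVec (fun _ => 1);
       (∑ i, b i) = 1 ∧
       (∑ i, b i * c i) = 1 / 2 ∧
       (∑ i, b i * A.mulVec c i) = 1 / 6) ∧
      2 < r ∧
      IsUnit (1 + r • A).det ∧
      (∀ i j, 0 ≤ (rkStack A b * (1 + r • A)⁻¹) i j) ∧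
      (∀ i : Fin 5,
        0 ≤ 1 - r * ((rkStack A b * (1 + r • A)⁻¹).mulVec (fun _ => 1)) i) := by
  rintro ⟨A, b, r, hA, ⟨-, hbc, hbAc⟩, hr, habs⟩
  have hbA2c : b ⬝ᵥ (A ^ 2 *ᵥ fun _ => 1) = 1 / 6 := by rw [sq, ← mulVec_mulVec]; exact hbAc
  have := IsAbsolutelyMonotoneAt.le_two habs (pow_eq_zero_of_strictLowerTriangular hA) hbc hbA2c
  linarith
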